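/- arXiv:2405.02944 — 2 statements merged into one kernel-verified Lean document; each statement's English description precedes it below -/
import Mathlib

section
/- Let n_c ≥ 2, let F_1, …, F_{n_c} be strictly positive real numbers, and let i* be an index. Suppose there are reals 0 < t < δ with F_{i*} ≤ t and F_j ≥ δ for every j ≠ i*. Then the softmax-of-reciprocal weight of i* satisfies ω_{i*} ≥ 1 / (1 + (n_c − 1)·exp(1/δ − 1/t)). -/
/-- If the loss of candidate `i*` is at most `t` while every other candidate's
loss is at least `δ > t`, then the softmax-of-reciprocal weight of `i*`
satisfies `ω i* ≥ 1 / (1 + (n_c - 1) * exp (1/δ - 1/t))`. -/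
theorem softmax_reciprocal_weight_lower_bound
    (n_c : ℕ) (hn : 2 ≤ n_c) (F : Fin n_c → ℝ) (hF : ∀ i, 0 < F i)
    (istar : Fin n_c) (t δ : ℝ) (ht : 0 < t) (htδ : t < δ)
    (hstar : F istar ≤ t) (hothers : ∀ j, j ≠ istar → δ ≤ F j) :
    1 / (1 + ((n_c : ℝ) - 1) * Real.exp (1 / δ - 1 / t)) ≤
      Real.exp (1 / F istar) / ∑ j, Real.exp (1 / F j) := by
  have hδ : 0 < δ := ht.trans htδ
  set E := Real.exp (1 / F istar) with hE
  have hS : (0:ℝ) < ∑ j, Real.exp (1 / F j) :=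
    Finset.sum_pos (fun j _ => Real.exp_pos _) ⟨istar, Finset.mem_univ _⟩
  have hA : (0:ℝ) < 1 + ((n_c : ℝ) - 1) * Real.exp (1 / δ - 1 / t) := by
    have : (1:ℝ) ≤ (n_c : ℝ) := by
      have : (2:ℝ) ≤ (n_c : ℝ) := by exact_mod_cast hn
      linarith
    nlinarith [Real.exp_pos (1 / δ - 1 / t)]
  rw [div_le_div_iff₀ hA hS, one_mul]
  -- S ≤ E * (1 + (n-1) exp(1/δ - 1/t))
  have key : ∀ j : Fin n_c, j ≠ istar →
      Real.exp (1 / F j) ≤ E * Real.exp (1 / δ - 1 / t) := by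
    intro j hj
    rw [hE, ← Real.exp_add]
    apply Real.exp_le_exp.2
    have h1 : 1 / F j ≤ 1 / δ :=
      one_div_le_one_div_of_le hδ (hothers j hj)
    have h2 : 1 / t ≤ 1 / F istar :=
      one_div_le_one_div_of_le (hF istar) hstar
    linarith
  have hsplit : (∑ j, Real.exp (1 / F j)) =
      E + ∑ j ∈ Finset.univ.erase istar, Real.exp (1 / F j) := by
    rw [hE, ← Finset.add_sum_erase _ _ (Finset.mem_univ istar)]
  rw [hsplit, mul_add, mul_one]
  have hbound : (∑ j ∈ Finset.univ.erase istar, Real.exp (1 / F j)) ≤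
      ((n_c : ℝ) - 1) * (E * Real.exp (1 / δ - 1 / t)) := by
    have := Finset.sum_le_card_nsmul (Finset.univ.erase istar)
      (fun j => Real.exp (1 / F j)) (E * Real.exp (1 / δ - 1 / t))
      (fun j hj => key j (Finset.ne_of_mem_erase hj))
    simpa [Finset.card_erase_of_mem, nsmul_eq_mul,
      Nat.cast_sub (Nat.one_le_of_lt hn)] using this
  linarith [hbound]
end

section
/- Let E be a topological space, let n_c ≥ 2, let x₀ ∈ E, and let f_1, …, f_{n_c} : E → ℝ be functions that are strictly positive on E ∖ {x₀} and continuous at x₀. Fix an index i* with f_{i*}(x₀) = 0, and suppose f_j(x₀) > 0 for every j ≠ i*. Define on E ∖ {x₀} the softmax-of-reciprocal Moment-Aggregation loss L_MA(x) = Σ_{i=1}^{n_c} ω_i(x)·f_i(x), where ω_i(x) = exp(1/f_i(x)) / Σ_{j=1}^{n_c} exp(1/f_j(x)). Then L_MA(x) → 0 as x → x₀ within E ∖ {x₀}. -/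
/-!
The softmax of the reciprocals puts weight at most `exp (1 / f i - 1 / f i*)` on candidate `i`.
As `x → x₀` the reciprocal `1 / f i*` blows up while `1 / f i` stays bounded for `i ≠ i*`, so
these weights vanish and the terms `i ≠ i*` go to `0`; the remaining term is a weight in `[0, 1]`
times `f i* → 0`.
-/

open Topology Filter Finset Real

section Softmax

variable {ι : Type*} [Fintype ι]

noncomputable def softmax (z : ι → ℝ) (i : ι) : ℝ :=
  exp (z i) / ∑ j, exp (z j)

lemma exp_le_sum_exp (z : ι → ℝ) (k : ι) : exp (z k) ≤ ∑ j, exp (z j) :=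
  single_le_sum (fun j _ => (exp_pos (z j)).le) (mem_univ k)

lemma softmax_nonneg (z : ι → ℝ) (i : ι) : 0 ≤ softmax z i :=
  div_nonneg (exp_pos _).le (sum_nonneg fun j _ => (exp_pos (z j)).le)

lemma softmax_le_one (z : ι → ℝ) (i : ι) : softmax z i ≤ 1 :=
  div_le_one_of_le₀ (exp_le_sum_exp z i) (sum_nonneg fun j _ => (exp_pos (z j)).le)

lemma softmax_le_exp_sub (z : ι → ℝ) (i k : ι) : softmax z i ≤ exp (z i - z k) := by
  rw [exp_sub]
  exact div_le_div_of_nonneg_left (exp_pos _).le (exp_pos _) (exp_le_sum_exp z k)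

variable {α : Type*} {l : Filter α}

lemma tendsto_softmax_zero {z : α → ι → ℝ} {i k : ι}
    (h : Tendsto (fun a => z a k - z a i) l atTop) :
    Tendsto (fun a => softmax (z a) i) l (𝓝 0) := by
  have hexp : Tendsto (fun a => exp (z a i - z a k)) l (𝓝 0) := by
    simpa only [Function.comp_def, neg_sub] using
      tendsto_exp_atBot.comp (tendsto_neg_atTop_atBot.comp h)
  exact squeeze_zero (fun a => softmax_nonneg _ _) (fun a => softmax_le_exp_sub _ _ k) hexp

lemma tendsto_softmax_mul_of_tendsto_zero (z : α → ι → ℝ) (i : ι) {g : α → ℝ}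
    (hg : Tendsto g l (𝓝 0)) :
    Tendsto (fun a => softmax (z a) i * g a) l (𝓝 0) := by
  refine isBoundedUnder_le_mul_tendsto_zero ⟨1, eventually_map.2 (.of_forall fun a => ?_)⟩ hg
  rw [Function.comp_apply, Real.norm_of_nonneg (softmax_nonneg _ _)]
  exact softmax_le_one _ _

end Softmax

theorem softmax_ma_loss_tendsto_zero_general
    {E : Type*} [TopologicalSpace E] (n_c : ℕ)
    (x₀ : E) (f : Fin n_c → E → ℝ)
    (hpos : ∀ i : Fin n_c, ∀ x : E, x ≠ x₀ → 0 < f i x)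
    (hcont : ∀ i : Fin n_c, ContinuousAt (f i) x₀)
    (istar : Fin n_c) (h0 : f istar x₀ = 0)
    (hothers : ∀ j : Fin n_c, j ≠ istar → 0 < f j x₀) :
    Tendsto
      (fun x => ∑ i, (Real.exp (1 / f i x) / ∑ j, Real.exp (1 / f j x)) * f i x)
      (𝓝[≠] x₀) (𝓝 0) := by
  have hf : ∀ i, Tendsto (f i) (𝓝[≠] x₀) (𝓝 (f i x₀)) :=
    fun i => (hcont i).tendsto.mono_left nhdsWithin_le_nhds
  have hstar : Tendsto (f istar) (𝓝[≠] x₀) (𝓝[>] 0) :=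
    tendsto_nhdsWithin_iff.2 ⟨h0 ▸ hf istar, eventually_mem_nhdsWithin.mono (hpos istar)⟩
  have hinv : Tendsto (fun x => 1 / f istar x) (𝓝[≠] x₀) atTop := by
    simpa only [one_div, Function.comp_def] using tendsto_inv_nhdsGT_zero.comp hstar
  rw [← sum_const_zero (s := (univ : Finset (Fin n_c)))]
  refine tendsto_finsetSum _ fun i _ => ?_
  change Tendsto (fun x => softmax (fun j => 1 / f j x) i * f i x) _ _
  by_cases hi : i = istar
  · subst hi
    exact tendsto_softmax_mul_of_tendsto_zero _ _ (h0 ▸ hf i)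
  · have hgap : Tendsto (fun x => 1 / f istar x - 1 / f i x) (𝓝[≠] x₀) atTop := by
      simpa only [sub_eq_add_neg, Pi.div_apply] using hinv.atTop_add ((tendsto_const_nhds.div (hf i)
        (hothers i hi).ne').neg)
    simpa using (tendsto_softmax_zero (z := fun x j => 1 / f j x) hgap).mul (hf i)

/-- If the candidate losses are strictly positive away from `x₀`, continuous at
`x₀`, the loss of candidate `i*` vanishes at `x₀` while the other losses are
positive at `x₀`, then the softmax-of-reciprocal Moment-Aggregation loss
tends to `0` as `x → x₀` within `E \ {x₀}`. -/
theorem softmax_ma_loss_tendsto_zero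
    {E : Type*} [TopologicalSpace E] (n_c : ℕ) (hn : 2 ≤ n_c)
    (x₀ : E) (f : Fin n_c → E → ℝ)
    (hpos : ∀ i : Fin n_c, ∀ x : E, x ≠ x₀ → 0 < f i x)
    (hcont : ∀ i : Fin n_c, ContinuousAt (f i) x₀)
    (istar : Fin n_c) (h0 : f istar x₀ = 0)
    (hothers : ∀ j : Fin n_c, j ≠ istar → 0 < f j x₀) :
    Tendsto
      (fun x => ∑ i, (Real.exp (1 / f i x) / ∑ j, Real.exp (1 / f j x)) * f i x)
      (𝓝[≠] x₀) (𝓝 0) :=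
  softmax_ma_loss_tendsto_zero_general n_c x₀ f hpos hcont istar h0 hothers
end
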